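/- Let K be a positive rational number and let B consist of a single basket (b, r), such that P_2(K, B) = 1 and P_3(K, B) = 2. Then b' = 3 and either r = 7, K = 2/7 and P_4(K, B) = 4, or r = 8, K = 1/8, P_4(K, B) = 3 and P_5(K, B) = 5. -/

import Mathlib

/-- A basket `(b, r)` with `0 < b < r` and `gcd(b, r) = 1`. -/
structure Basket where
  b : ℕ
  r : ℕ
  b_pos : 0 < b
  b_lt_r : b < r
  coprime : Nat.gcd b r = 1

/-- Reid's correction term `l_Q(m)` of a basket `Q` for `m ≥ 2`. -/
def Basket.corr (Q : Basket) (m : ℕ) : ℚ :=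
  ∑ j ∈ Finset.Icc 1 (m - 1),
    ((Q.b * j % Q.r : ℕ) : ℚ) * ((Q.r : ℚ) - ((Q.b * j % Q.r : ℕ) : ℚ)) / (2 * (Q.r : ℚ))

/-- The virtual `m`-th plurigenus `P_m(K, B)` for `m ≥ 2`. -/
def plurigenus (K : ℚ) (B : Multiset Basket) (m : ℕ) : ℚ :=
  (1 / 12 : ℚ) * m * (m - 1) * (2 * m - 1) * K + (B.map (fun Q => Q.corr m)).sum

/-- `b' = b` if `2b ≤ r`, and `b' = r - b` otherwise. -/
def Basket.b' (Q : Basket) : ℕ := if 2 * Q.b ≤ Q.r then Q.b else Q.r - Q.b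

/-- The basket `(1, 2)`. -/
def B12 : Basket := ⟨1, 2, by decide, by decide, by decide⟩

/-!
Replacing `b` by `r - b` negates every residue `b j mod r`, and the summand `x (r - x)` of
Reid's correction term is invariant under `x ↦ r - x` (modulo `r`); so we may assume `2b ≤ r`,
where `b' = b`. Then `P₂ = 1` reads `K r = 2r - b(r - b)`, and eliminating `K` from `P₃ = 2`
leaves `a(r - a) + 6r = 4b(r - b)` with `a = 2b mod r`. For `2b < r` we have `a = 2b` and
this is `6r = 2br`, i.e. `b = 3`; for `2b = r` coprimality forces `(b, r) = (1, 2)`, which fails.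
With `b = 3`, `K r = 9 - r > 0`, `6 ≤ r` and `gcd(3, r) = 1` leave `r = 7` or `r = 8`.
-/

lemma mul_sub_self_eq_of_dvd_add {r x y : ℕ} (hx : x < r) (hy : y < r) (h : r ∣ x + y) :
    (y : ℚ) * (r - y) = x * (r - x) := by
  obtain ⟨k, hk⟩ := h
  have hk2 : k < 2 := Nat.lt_of_mul_lt_mul_left (a := r) (by omega)
  interval_cases k
  · obtain ⟨rfl, rfl⟩ : x = 0 ∧ y = 0 := by omega
    simp
  · have hxy : (y : ℚ) = r - x := by rw [eq_sub_iff_add_eq']; exact_mod_cast hk.trans (mul_one r)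
    rw [hxy]
    ring

namespace Basket

def flip (Q : Basket) : Basket where
  b := Q.r - Q.b
  r := Q.r
  b_pos := Nat.sub_pos_of_lt Q.b_lt_r
  b_lt_r := Nat.sub_lt (Q.b_pos.trans Q.b_lt_r) Q.b_pos
  coprime := (Nat.gcd_self_sub_left Q.b_lt_r.le).trans Q.coprime

lemma flip_r (Q : Basket) : Q.flip.r = Q.r := rfl

lemma r_pos (Q : Basket) : 0 < Q.r := Q.b_pos.trans Q.b_lt_r

lemma corr_flip (Q : Basket) (m : ℕ) : Q.flip.corr m = Q.corr m := by
  refine Finset.sum_congr rfl fun j _ => ?_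
  have hdvd : Q.r ∣ Q.b * j % Q.r + (Q.r - Q.b) * j % Q.r := by
    rw [Nat.dvd_iff_mod_eq_zero, ← Nat.add_mod, ← add_mul, Nat.add_sub_cancel' Q.b_lt_r.le,
      Nat.mul_mod_right]
  simp only [flip]
  rw [mul_sub_self_eq_of_dvd_add (Nat.mod_lt _ Q.r_pos) (Nat.mod_lt _ Q.r_pos) hdvd]

lemma b'_flip (Q : Basket) : Q.flip.b' = Q.b' := by
  have := Q.b_lt_r
  unfold b' flip
  dsimp only
  split_ifs <;> omega

lemma corr_two (Q : Basket) : Q.corr 2 = Q.b * (Q.r - Q.b) / (2 * Q.r) := by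
  simp [corr, Nat.mod_eq_of_lt Q.b_lt_r]

lemma corr_three (Q : Basket) :
    Q.corr 3 =
      (Q.b * (Q.r - Q.b) + (2 * Q.b % Q.r : ℕ) * (Q.r - (2 * Q.b % Q.r : ℕ))) / (2 * Q.r) := by
  rw [corr, show Finset.Icc 1 (3 - 1) = {1, 2} from rfl, Finset.sum_pair (by decide : (1 : ℕ) ≠ 2),
    mul_one, Nat.mod_eq_of_lt Q.b_lt_r, mul_comm Q.b 2, add_div]

end Basket

lemma plurigenus_singleton (K : ℚ) (Q : Basket) (m : ℕ) :
    plurigenus K {Q} m = m * (m - 1) * (2 * m - 1) / 12 * K + Q.corr m := by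
  simp only [plurigenus, Multiset.map_singleton, Multiset.sum_singleton]
  ring

lemma plurigenus_flip (K : ℚ) (Q : Basket) (m : ℕ) :
    plurigenus K {Q.flip} m = plurigenus K {Q} m := by
  simp only [plurigenus_singleton, Basket.corr_flip]

lemma Basket.b_eq_three_of_plurigenus {K : ℚ} {Q : Basket} (hQ : 2 * Q.b ≤ Q.r)
    (h2 : plurigenus K {Q} 2 = 1) (h3 : plurigenus K {Q} 3 = 2) : Q.b = 3 := by
  rw [plurigenus_singleton, corr_two] at h2
  rw [plurigenus_singleton, corr_three] at h3
  have hr : (Q.r : ℚ) ≠ 0 := by exact_mod_cast Q.r_pos.ne'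
  have key : ((2 * Q.b % Q.r : ℕ) : ℚ) * (Q.r - (2 * Q.b % Q.r : ℕ)) + 6 * Q.r =
      4 * (Q.b * (Q.r - Q.b)) := by
    norm_num at h2 h3
    field_simp at h2 h3
    linarith
  rcases hQ.lt_or_eq with hlt | heq
  · rw [Nat.mod_eq_of_lt hlt] at key
    push_cast at key
    have : (Q.r : ℚ) * (Q.b - 3) = 0 := by linear_combination (-1 / 2 : ℚ) * key
    exact_mod_cast sub_eq_zero.1 ((mul_eq_zero.1 this).resolve_left hr)
  · have hb : Q.b = 1 := by simpa [← heq] using Q.coprime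
    rw [← heq, Nat.mod_self, hb] at key
    norm_num at key

lemma Basket.r_eq_and_K_eq_of_b_eq_three {K : ℚ} (hK : 0 < K) {Q : Basket} (hQ : 2 * Q.b ≤ Q.r)
    (hb : Q.b = 3) (h2 : plurigenus K {Q} 2 = 1) :
    Q.r = 7 ∧ K = 2 / 7 ∨ Q.r = 8 ∧ K = 1 / 8 := by
  rw [plurigenus_singleton, corr_two, hb] at h2
  have hr : (Q.r : ℚ) ≠ 0 := by exact_mod_cast Q.r_pos.ne'
  have hKr : K * Q.r = 9 - Q.r := by
    norm_num at h2
    field_simp at h2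
    linarith
  have hr9 : Q.r < 9 := by
    have : (0 : ℚ) < 9 - Q.r := hKr ▸ mul_pos hK (by positivity)
    exact_mod_cast sub_pos.1 this
  have hr6 : Q.r ≠ 6 := fun h => by simpa [hb, h] using Q.coprime
  rcases (by omega : Q.r = 7 ∨ Q.r = 8) with h | h <;> rw [h] at hKr <;> [left; right] <;>
    exact ⟨h, by norm_num at hKr; linarith⟩

theorem stmt17 (K : ℚ) (hK : 0 < K) (Q : Basket)
    (h2 : plurigenus K {Q} 2 = 1)
    (h3 : plurigenus K {Q} 3 = 2) :
    Q.b' = 3 ∧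
    ((Q.r = 7 ∧ K = 2 / 7 ∧ plurigenus K {Q} 4 = 4) ∨
     (Q.r = 8 ∧ K = 1 / 8 ∧ plurigenus K {Q} 4 = 3 ∧ plurigenus K {Q} 5 = 5)) := by
  wlog hQ : 2 * Q.b ≤ Q.r generalizing Q
  · have hflip : 2 * Q.flip.b ≤ Q.flip.r := by
      have := Q.b_lt_r
      simp only [Basket.flip]
      omega
    simpa only [plurigenus_flip, Basket.b'_flip, Basket.flip_r] using
      this Q.flip (by rwa [plurigenus_flip]) (by rwa [plurigenus_flip]) hflip
  have hb := Q.b_eq_three_of_plurigenus hQ h2 h3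
  refine ⟨by rw [Basket.b', if_pos hQ, hb], ?_⟩
  simp only [plurigenus, Basket.corr, Multiset.map_singleton, Multiset.sum_singleton]
  rcases Q.r_eq_and_K_eq_of_b_eq_three hK hQ hb h2 with ⟨hr, rfl⟩ | ⟨hr, rfl⟩ <;> rw [hb, hr] <;>
    norm_num [Finset.sum_Icc_succ_top]
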